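/- With the setup of the Markov jump linear system x(k+1) = αA_{𝒢(k)}x(k), x(0) = 𝟙_n, and 𝒜 = (Pᵀ⊗I_n)(⊕_ℓ A_ℓ): if α·ρ(𝒜) < 1, then the Katz centrality v = ∑_{k=0}^∞ E[x(k)] exists and v = (𝟙_Lᵀ ⊗ I_n)(I_{nL} - α𝒜)^{-1}(ζ_0 ⊗ 𝟙_n), where (ζ_0)_ℓ = P(𝒢(0) = ℓ). -/

import Mathlib

/-!
Write `q k ℓ = E[x(k) 𝟙{𝒢(k) = ℓ}] ∈ ℝⁿ` (stacked over `ℓ`, this is `regimeMean`), so that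
`E[x(k)] = ∑ ℓ, q k ℓ`. Since `x(k+1)` is a function of `𝒢(0), …, 𝒢(k)`, the Markov property
moves the indicator of `𝒢(k+1) = j` onto a factor `P 𝒢(k) j`, which gives `q (k+1) = α𝒜 q k` and
`q 0 = ζ₀ ⊗ 𝟙ₙ`; hence `E[x(k)] = (𝟙_Lᵀ ⊗ Iₙ)(α𝒜)ᵏ(ζ₀ ⊗ 𝟙ₙ)`. By Gelfand's formula `‖(α𝒜)ᵏ‖`
eventually decays geometrically when `ρ(α𝒜) < 1`, so the Neumann series `∑ (α𝒜)ᵏ` converges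
to `(I - α𝒜)⁻¹`.
-/

open Matrix MeasureTheory

noncomputable def specRad {m : Type*} [Fintype m] [DecidableEq m]
    (A : Matrix m m ℝ) : ℝ :=
  (spectralRadius ℂ (A.map (algebraMap ℝ ℂ))).toReal

noncomputable def calA {n L : ℕ} (P : Matrix (Fin L) (Fin L) ℝ)
    (A : Fin L → Matrix (Fin n) (Fin n) ℝ) :
    Matrix (Fin L × Fin n) (Fin L × Fin n) ℝ :=
  (Matrix.kroneckerMap (· * ·) Pᵀ (1 : Matrix (Fin n) (Fin n) ℝ)) *
    ((Matrix.blockDiagonal fun ℓ => A ℓ).reindex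
      (Equiv.prodComm (Fin n) (Fin L)) (Equiv.prodComm (Fin n) (Fin L)))

open Filter
open scoped ENNReal

section
variable {𝕜 A : Type*} [NormedField 𝕜] [Ring A] [Algebra 𝕜 A]

lemma spectralRadius_smul_le (c : 𝕜) (a : A) :
    spectralRadius 𝕜 (c • a) ≤ ‖c‖₊ * spectralRadius 𝕜 a := by
  rcases eq_or_ne c 0 with rfl | hc
  · simp [spectrum.spectralRadius_zero]
  rw [spectralRadius, ← Units.smul_mk0 hc, spectrum.unit_smul_eq_smul]
  refine iSup₂_le fun z hz => ?_
  obtain ⟨w, hw, rfl⟩ := Set.mem_smul_set.1 hz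
  rw [Units.smul_mk0, smul_eq_mul, nnnorm_mul, ENNReal.coe_mul]
  gcongr
  exact le_iSup₂ (f := fun k (_ : k ∈ spectrum 𝕜 a) => (‖k‖₊ : ℝ≥0∞)) w hw

end

section
variable {A : Type*} [NormedRing A] [NormedAlgebra ℂ A] [CompleteSpace A]

lemma spectralRadius_lt_top (a : A) : spectralRadius ℂ a < ⊤ :=
  (spectrum.spectralRadius_le_pow_nnnorm_pow_one_div ℂ a 0).trans_lt (by simp [ENNReal.mul_lt_top])

lemma summable_pow_of_spectralRadius_lt_one {a : A} (h : spectralRadius ℂ a < 1) :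
    Summable fun k : ℕ => a ^ k := by
  obtain ⟨r, hρr, hr1⟩ := ENNReal.lt_iff_exists_nnreal_btwn.1 h
  have hgelfand := spectrum.pow_nnnorm_pow_one_div_tendsto_nhds_spectralRadius a
  have hgeom : ∀ᶠ k : ℕ in atTop, ‖a ^ k‖ ≤ (r : ℝ) ^ k := by
    filter_upwards [hgelfand.eventually_lt_const hρr, eventually_ne_atTop 0] with k hk hk0
    have hlt : (‖a ^ k‖₊ : ℝ≥0∞) < (r : ℝ≥0∞) ^ k :=
      calc (‖a ^ k‖₊ : ℝ≥0∞) = ((‖a ^ k‖₊ : ℝ≥0∞) ^ (1 / k : ℝ)) ^ k := by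
            rw [← ENNReal.rpow_natCast, ← ENNReal.rpow_mul,
              one_div_mul_cancel (by exact_mod_cast hk0), ENNReal.rpow_one]
        _ < (r : ℝ≥0∞) ^ k := ENNReal.pow_lt_pow_left hk0 hk
    exact_mod_cast hlt.le
  exact .of_norm_bounded_eventually_nat
    (summable_geometric_of_lt_one r.coe_nonneg (by exact_mod_cast hr1)) hgeom

end

section
variable {m : Type*} [Fintype m] [DecidableEq m]

section
attribute [local instance] Matrix.linftyOpNormedRing Matrix.linftyOpNormedAlgebra

lemma specRad_smul_le (B : Matrix m m ℝ) {α : ℝ} (hα : 0 ≤ α) :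
    specRad (α • B) ≤ α * specRad B := by
  have hmap : (α • B).map (algebraMap ℝ ℂ) = (α : ℂ) • B.map (algebraMap ℝ ℂ) := by
    ext; simp
  have hle := spectralRadius_smul_le (α : ℂ) (B.map (algebraMap ℝ ℂ))
  rw [← hmap] at hle
  calc specRad (α • B)
      ≤ (‖(α : ℂ)‖₊ * spectralRadius ℂ (B.map (algebraMap ℝ ℂ))).toReal :=
        ENNReal.toReal_mono (ENNReal.mul_ne_top ENNReal.coe_ne_top (spectralRadius_lt_top _).ne) hle
    _ = α * specRad B := by simp [specRad, abs_of_nonneg hα]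

lemma summable_pow_of_specRad_lt_one {B : Matrix m m ℝ} (h : specRad B < 1) :
    Summable fun k : ℕ => B ^ k := by
  have hρ : spectralRadius ℂ (B.map (algebraMap ℝ ℂ)) < 1 := by
    rwa [specRad, ← ENNReal.ofReal_lt_one, ENNReal.ofReal_toReal (spectralRadius_lt_top _).ne] at h
  convert (summable_pow_of_spectralRadius_lt_one hρ).map Complex.reAddGroupHom.mapMatrix
    (continuous_id.matrix_map Complex.continuous_re) using 2 with k
  rw [Function.comp_apply, ← RingHom.mapMatrix_apply, ← map_pow]
  ext
  simp

end

lemma hasSum_pow_of_specRad_lt_one {B : Matrix m m ℝ} (h : specRad B < 1) :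
    HasSum (fun k : ℕ => B ^ k) (1 - B)⁻¹ := by
  have hs := summable_pow_of_specRad_lt_one h
  rw [inv_eq_right_inv hs.one_sub_mul_tsum_pow]
  exact hs.hasSum

end

lemma calA_apply {n L : ℕ} (P : Matrix (Fin L) (Fin L) ℝ) (A : Fin L → Matrix (Fin n) (Fin n) ℝ)
    (j ℓ : Fin L) (i i' : Fin n) :
    calA P A (j, i) (ℓ, i') = P ℓ j * A ℓ i i' := by
  simp [calA, mul_apply, blockDiagonal_apply, one_apply, Fintype.sum_prod_type, ite_mul, mul_ite,
    Finset.sum_ite_eq]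

section
variable {Ω β : Type*} [MeasurableSpace Ω] {μ : Measure Ω} [IsFiniteMeasure μ]
  [Fintype β] [MeasurableSpace β] [MeasurableSingletonClass β] {Y : Ω → β}

lemma integrable_comp_of_fintype (hY : Measurable Y) (F : β → ℝ) :
    Integrable (fun ω => F (Y ω)) μ :=
  Integrable.of_finite.comp_measurable hY

lemma integral_comp_eq_sum (hY : Measurable Y) (F : β → ℝ) :
    ∫ ω, F (Y ω) ∂μ = ∑ b, μ.real (Y ⁻¹' {b}) * F b := by
  rw [← integral_map hY.aemeasurable Integrable.of_finite.aestronglyMeasurable,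
    integral_fintype Integrable.of_finite]
  simp [map_measureReal_apply hY (measurableSet_singleton _)]

end

section
variable {Ω : Type*} {L n : ℕ}

def chainPath (G : ℕ → Ω → Fin L) (k : ℕ) (ω : Ω) : Fin (k + 1) → Fin L := fun t => G t ω

lemma chainPath_last (G : ℕ → Ω → Fin L) (k : ℕ) (ω : Ω) :
    chainPath G k ω (Fin.last k) = G k ω := by
  simp [chainPath]

lemma init_chainPath (G : ℕ → Ω → Fin L) (k : ℕ) (ω : Ω) :
    Fin.init (chainPath G (k + 1) ω) = chainPath G k ω := by
  funext t
  simp [chainPath, Fin.init]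

def IsJumpSystemSolution (G : ℕ → Ω → Fin L) (A : Fin L → Matrix (Fin n) (Fin n) ℝ) (α : ℝ)
    (x : ℕ → Ω → Fin n → ℝ) : Prop :=
  (∀ ω, x 0 ω = 1) ∧ ∀ k ω, x (k + 1) ω = α • (A (G k ω) *ᵥ x k ω)

lemma IsJumpSystemSolution.exists_eq_comp_chainPath {G : ℕ → Ω → Fin L}
    {A : Fin L → Matrix (Fin n) (Fin n) ℝ} {α : ℝ} {x : ℕ → Ω → Fin n → ℝ}
    (hsys : IsJumpSystemSolution G A α x) (k : ℕ) :
    ∃ g : (Fin (k + 1) → Fin L) → Fin n → ℝ, ∀ ω, x k ω = g (chainPath G k ω) := by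
  induction k with
  | zero => exact ⟨fun _ => 1, hsys.1⟩
  | succ k ih =>
    obtain ⟨g, hg⟩ := ih
    refine ⟨fun s => α • (A (Fin.init s (Fin.last k)) *ᵥ g (Fin.init s)), fun ω => ?_⟩
    beta_reduce
    rw [init_chainPath, chainPath_last, hsys.2, hg]

variable [MeasurableSpace Ω]

lemma measurable_chainPath {G : ℕ → Ω → Fin L} (hG : ∀ k, Measurable (G k)) (k : ℕ) :
    Measurable (chainPath G k) :=
  measurable_pi_lambda _ fun t => hG t

def HasTransitionMatrix (μ : Measure Ω) (G : ℕ → Ω → Fin L) (P : Matrix (Fin L) (Fin L) ℝ) :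
    Prop :=
  ∀ (k : ℕ) (j : Fin L) (s : Fin (k + 1) → Fin L),
    μ {ω | G (k + 1) ω = j ∧ ∀ t : Fin (k + 1), G t ω = s t}
      = ENNReal.ofReal (P (s (Fin.last k)) j) * μ {ω | ∀ t : Fin (k + 1), G t ω = s t}

theorem HasTransitionMatrix.integral_ite_succ {μ : Measure Ω} [IsFiniteMeasure μ]
    {P : Matrix (Fin L) (Fin L) ℝ} {G : ℕ → Ω → Fin L} (hMarkov : HasTransitionMatrix μ G P)
    (hP : ∀ ℓ k, 0 ≤ P ℓ k) (hG : ∀ k, Measurable (G k))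
    (k : ℕ) (j : Fin L) (F : (Fin (k + 1) → Fin L) → ℝ) :
    ∫ ω, (if G (k + 1) ω = j then F (chainPath G k ω) else 0) ∂μ
      = ∫ ω, P (G k ω) j * F (chainPath G k ω) ∂μ := by
  have hpath := measurable_chainPath hG k
  have hcylinder : ∀ s, μ.real ((fun ω => (G (k + 1) ω, chainPath G k ω)) ⁻¹' {(j, s)})
      = μ.real (chainPath G k ⁻¹' {s}) * P (s (Fin.last k)) j := by
    intro s
    have hset : ∀ ω, chainPath G k ω = s ↔ ∀ t : Fin (k + 1), G t ω = s t := fun ω => funext_iff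
    simp only [measureReal_def, Set.preimage, Set.mem_singleton_iff, Prod.mk.injEq, hset]
    rw [hMarkov, ENNReal.toReal_mul, ENNReal.toReal_ofReal (hP _ _), mul_comm]
  have hrhs : ∫ ω, P (G k ω) j * F (chainPath G k ω) ∂μ
      = ∑ s, μ.real (chainPath G k ⁻¹' {s}) * (P (s (Fin.last k)) j * F s) := by
    simp_rw [← chainPath_last G k]
    exact integral_comp_eq_sum hpath fun s => P (s (Fin.last k)) j * F s
  rw [hrhs, integral_comp_eq_sum ((hG _).prodMk hpath) fun p => if p.1 = j then F p.2 else 0,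
    Fintype.sum_prod_type]
  simp only [mul_ite, mul_zero, Finset.sum_comm (γ := Fin L), Finset.sum_ite_eq', Finset.mem_univ,
    if_true, hcylinder, mul_assoc]

noncomputable def regimeMean (μ : Measure Ω) (G : ℕ → Ω → Fin L) (x : ℕ → Ω → Fin n → ℝ)
    (k : ℕ) : Fin L × Fin n → ℝ :=
  fun p => ∫ ω, (if G k ω = p.1 then x k ω p.2 else 0) ∂μ

variable (μ : Measure Ω) [IsFiniteMeasure μ] {P : Matrix (Fin L) (Fin L) ℝ} {G : ℕ → Ω → Fin L}
  {A : Fin L → Matrix (Fin n) (Fin n) ℝ} {α : ℝ} {x : ℕ → Ω → Fin n → ℝ}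

lemma integrable_ite_eq (hG : ∀ k, Measurable (G k)) (hsys : IsJumpSystemSolution G A α x)
    (k : ℕ) (ℓ : Fin L) (i : Fin n) :
    Integrable (fun ω => if G k ω = ℓ then x k ω i else 0) μ := by
  obtain ⟨g, hg⟩ := hsys.exists_eq_comp_chainPath k
  simp_rw [hg, ← chainPath_last G k]
  exact integrable_comp_of_fintype (measurable_chainPath hG k)
    fun s => if s (Fin.last k) = ℓ then g s i else 0

lemma integral_eq_sum_regimeMean (hG : ∀ k, Measurable (G k))
    (hsys : IsJumpSystemSolution G A α x) (k : ℕ) (i : Fin n) :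
    ∫ ω, x k ω i ∂μ = ∑ ℓ, regimeMean μ G x k (ℓ, i) := by
  simp only [regimeMean]
  rw [← integral_finsetSum _ fun ℓ _ => integrable_ite_eq μ hG hsys k ℓ i]
  simp [Finset.sum_ite_eq]

lemma regimeMean_zero (hG : ∀ k, Measurable (G k)) (hsys : IsJumpSystemSolution G A α x)
    (ζ0 : Fin L → ℝ) (hζ0 : ∀ ℓ, ζ0 ℓ = μ.real {ω | G 0 ω = ℓ}) :
    regimeMean μ G x 0 = fun p => ζ0 p.1 := by
  funext p
  have h := integral_comp_eq_sum (μ := μ) (hG 0) fun ℓ => if ℓ = p.1 then (1 : ℝ) else 0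
  simp only [mul_ite, mul_one, mul_zero, Finset.sum_ite_eq', Finset.mem_univ, if_true] at h
  simp only [regimeMean, hsys.1, Pi.one_apply, hζ0, h]
  rfl

lemma regimeMean_succ (hP : ∀ ℓ k, 0 ≤ P ℓ k) (hG : ∀ k, Measurable (G k))
    (hMarkov : HasTransitionMatrix μ G P) (hsys : IsJumpSystemSolution G A α x) (k : ℕ) :
    regimeMean μ G x (k + 1) = (α • calA P A) *ᵥ regimeMean μ G x k := by
  funext ⟨j, i⟩
  obtain ⟨g, hg⟩ := hsys.exists_eq_comp_chainPath k
  set F : (Fin (k + 1) → Fin L) → ℝ := fun s => (α • (A (s (Fin.last k)) *ᵥ g s)) i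
  have hstep : ∀ ω, x (k + 1) ω i = F (chainPath G k ω) := by
    intro ω
    rw [hsys.2, hg, ← chainPath_last G k ω]
  have hsplit : ∀ ω, P (G k ω) j * x (k + 1) ω i
      = ∑ p, (α • calA P A) (j, i) p * (if G k ω = p.1 then x k ω p.2 else 0) := by
    intro ω
    simp only [hsys.2, Pi.smul_apply, mulVec, dotProduct, smul_eq_mul, Finset.mul_sum,
      Matrix.smul_apply, mul_ite, mul_zero, Fintype.sum_prod_type, calA_apply,
      Finset.sum_ite_irrel, Finset.sum_const_zero, Finset.sum_ite_eq, Finset.mem_univ, if_true]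
    exact Finset.sum_congr rfl fun _ _ => by ring
  calc regimeMean μ G x (k + 1) (j, i)
      = ∫ ω, (if G (k + 1) ω = j then F (chainPath G k ω) else 0) ∂μ := by
        simp_rw [← hstep]
        rfl
    _ = ∫ ω, P (G k ω) j * x (k + 1) ω i ∂μ := by
        simp_rw [hstep]
        exact hMarkov.integral_ite_succ hP hG k j F
    _ = ((α • calA P A) *ᵥ regimeMean μ G x k) (j, i) := by
        simp only [hsplit, mulVec, dotProduct, regimeMean]
        rw [integral_finsetSum _ fun p _ => (integrable_ite_eq μ hG hsys k p.1 p.2).const_mul _]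
        simp only [integral_const_mul]

lemma regimeMean_eq_pow (hP : ∀ ℓ k, 0 ≤ P ℓ k) (hG : ∀ k, Measurable (G k))
    (hMarkov : HasTransitionMatrix μ G P) (hsys : IsJumpSystemSolution G A α x)
    (ζ0 : Fin L → ℝ) (hζ0 : ∀ ℓ, ζ0 ℓ = μ.real {ω | G 0 ω = ℓ}) (k : ℕ) :
    regimeMean μ G x k = (α • calA P A) ^ k *ᵥ fun p => ζ0 p.1 := by
  induction k with
  | zero => rw [pow_zero, one_mulVec, regimeMean_zero μ hG hsys ζ0 hζ0]
  | succ k ih => rw [regimeMean_succ μ hP hG hMarkov hsys, ih, mulVec_mulVec, ← pow_succ']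

end

theorem stmt11_general {n L : ℕ} {Ω : Type*} [MeasurableSpace Ω]
    (μ : Measure Ω) [IsProbabilityMeasure μ]
    (P : Matrix (Fin L) (Fin L) ℝ)
    (hP : ∀ ℓ k, 0 ≤ P ℓ k)
    (G : ℕ → Ω → Fin L) (hG : ∀ k, Measurable (G k))
    (hMarkov : ∀ (k : ℕ) (j : Fin L) (s : Fin (k + 1) → Fin L),
      μ {ω | G (k + 1) ω = j ∧ ∀ t : Fin (k + 1), G t ω = s t}
        = ENNReal.ofReal (P (s (Fin.last k)) j) *
            μ {ω | ∀ t : Fin (k + 1), G t ω = s t})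
    (A : Fin L → Matrix (Fin n) (Fin n) ℝ)
    (α : ℝ) (hα : 0 < α) (hρ : α * specRad (calA P A) < 1)
    (x : ℕ → Ω → Fin n → ℝ)
    (hx0 : ∀ ω, x 0 ω = 1)
    (hx : ∀ k ω, x (k + 1) ω = α • ((A (G k ω)) *ᵥ x k ω))
    (ζ0 : Fin L → ℝ) (hζ0 : ∀ ℓ, ζ0 ℓ = (μ {ω | G 0 ω = ℓ}).toReal) :
    HasSum (fun k : ℕ => fun i : Fin n => ∫ ω, x k ω i ∂μ)
      (fun i : Fin n =>
        ∑ ℓ : Fin L,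
          ((1 - α • calA P A)⁻¹ *ᵥ fun p : Fin L × Fin n => ζ0 p.1) (ℓ, i)) := by
  have hsys : IsJumpSystemSolution G A α x := ⟨hx0, hx⟩
  have hneumann : HasSum (fun k : ℕ => (α • calA P A) ^ k) (1 - α • calA P A)⁻¹ :=
    hasSum_pow_of_specRad_lt_one ((specRad_smul_le _ hα.le).trans_lt hρ)
  simp_rw [integral_eq_sum_regimeMean μ hG hsys, regimeMean_eq_pow μ hP hG hMarkov hsys ζ0 hζ0]
  refine Pi.hasSum.2 fun i => hasSum_sum fun ℓ _ => hasSum_sum fun q _ => ?_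
  exact (Pi.hasSum.1 (Pi.hasSum.1 hneumann _) q).mul_right _

/-- Katz centrality of a Markovian temporal network: if $\alpha\rho(\mathcal A)<1$,
then $v=\sum_k E[x(k)]$ exists and equals
$(\mathbf 1_L^\top\otimes I_n)(I-\alpha\mathcal A)^{-1}(\zeta_0\otimes\mathbf 1_n)$. -/
theorem stmt11 {n L : ℕ} {Ω : Type*} [MeasurableSpace Ω]
    (μ : Measure Ω) [IsProbabilityMeasure μ]
    (P : Matrix (Fin L) (Fin L) ℝ)
    (hP : ∀ ℓ k, 0 ≤ P ℓ k) (hProw : ∀ ℓ, ∑ k, P ℓ k = 1)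
    (G : ℕ → Ω → Fin L) (hG : ∀ k, Measurable (G k))
    (hMarkov : ∀ (k : ℕ) (j : Fin L) (s : Fin (k + 1) → Fin L),
      μ {ω | G (k + 1) ω = j ∧ ∀ t : Fin (k + 1), G t ω = s t}
        = ENNReal.ofReal (P (s (Fin.last k)) j) *
            μ {ω | ∀ t : Fin (k + 1), G t ω = s t})
    (A : Fin L → Matrix (Fin n) (Fin n) ℝ) (hA : ∀ ℓ i j, 0 ≤ A ℓ i j)
    (α : ℝ) (hα : 0 < α) (hρ : α * specRad (calA P A) < 1)
    (x : ℕ → Ω → Fin n → ℝ)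
    (hx0 : ∀ ω, x 0 ω = 1)
    (hx : ∀ k ω, x (k + 1) ω = α • ((A (G k ω)) *ᵥ x k ω))
    (ζ0 : Fin L → ℝ) (hζ0 : ∀ ℓ, ζ0 ℓ = (μ {ω | G 0 ω = ℓ}).toReal) :
    HasSum (fun k : ℕ => fun i : Fin n => ∫ ω, x k ω i ∂μ)
      (fun i : Fin n =>
        ∑ ℓ : Fin L,
          ((1 - α • calA P A)⁻¹ *ᵥ fun p : Fin L × Fin n => ζ0 p.1) (ℓ, i)) :=
  stmt11_general μ P hP G hG hMarkov A α hα hρ x hx0 hx ζ0 hζ0
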